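/- (Corollary 5.2.) Let Ω = 𝔹^m = {z ∈ ℂ^m : ∑_{ℓ=1}^m |z_ℓ|² < 1} be the open Euclidean unit ball, let E₀ and H be complex Hilbert spaces, κ : 𝔹^m → (E₀ →L[ℂ] H) with {κ w x} of dense linear span in H and kernel K z w := (κ z)* ∘L (κ w), and let M₁, …, M_m be bounded operators on H with (M_ℓ)* (κ w x) = conj(w_ℓ) • (κ w x) for all w, x, ℓ. Then ∑_{ℓ=1}^m M_ℓ ∘ (M_ℓ)* ≤ id_H (i.e., ⟪∑_ℓ M_ℓ (M_ℓ)* f, f⟫ ≤ ‖f‖² for all f ∈ H) if and only if the kernel (z, w) ↦ (1 − ∑_{ℓ=1}^m z_ℓ · conj(w_ℓ)) • K z w is nonnegative definite on 𝔹^m. -/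

import Mathlib

open scoped ComplexOrder

/-- A kernel `G : Ω → Ω → (E₀ →L[ℂ] E₀)` is *nonnegative definite*. -/
def IsNNDKernel {Ω E₀ : Type*} [NormedAddCommGroup E₀] [InnerProductSpace ℂ E₀]
    (G : Ω → Ω → (E₀ →L[ℂ] E₀)) : Prop :=
  ∀ (p : ℕ) (w : Fin p → Ω) (ζ : Fin p → E₀),
    0 ≤ ∑ i : Fin p, ∑ j : Fin p, (inner ℂ (G (w j) (w i) (ζ i)) (ζ j) : ℂ)

/-!
Put `D := 1 - ∑ ℓ, M ℓ ∘L (M ℓ)†`. Since `κ w x` is a joint eigenvector of the `(M ℓ)†`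
with eigenvalues `conj (w ℓ)`, the kernel factors as `(1 - ⟨z, w⟩) • K z w = (κ z)† ∘L D ∘L κ w`.
Hence its quadratic form at points `w i` and vectors `ζ i` is `⟪D f, f⟫` with
`f = ∑ i, κ (w i) (ζ i)`. Such `f` exhaust the dense span of the ranges of `κ`, and
`f ↦ ⟪D f, f⟫` is continuous, so the kernel is nonnegative definite iff `⟪D f, f⟫ ≥ 0` on all of
`H`, which is row contractivity.
-/

section

open ContinuousLinearMap

variable {E₀ H : Type*}
    [NormedAddCommGroup E₀] [InnerProductSpace ℂ E₀] [CompleteSpace E₀]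
    [NormedAddCommGroup H] [InnerProductSpace ℂ H] [CompleteSpace H]

lemma exists_sum_eq_of_mem_span_iUnion_range {R E F Ω : Type*} [Semiring R]
    [AddCommMonoid E] [Module R E] [AddCommMonoid F] [Module R F]
    (κ : Ω → E →ₗ[R] F) {f : F}
    (hf : f ∈ Submodule.span R (⋃ w, Set.range (κ w))) :
    ∃ (p : ℕ) (w : Fin p → Ω) (ζ : Fin p → E), f = ∑ i, κ (w i) (ζ i) := by
  induction hf using Submodule.span_induction with
  | mem x h =>
    obtain ⟨_, ⟨w, rfl⟩, x, rfl⟩ := h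
    exact ⟨1, fun _ => w, fun _ => x, by simp⟩
  | zero => exact ⟨0, Fin.elim0, Fin.elim0, by simp⟩
  | add x y _ _ ihx ihy =>
    obtain ⟨p, w, ζ, rfl⟩ := ihx
    obtain ⟨q, w', ζ', rfl⟩ := ihy
    refine ⟨p + q, Fin.append w w', Fin.append ζ ζ', ?_⟩
    simp [Fin.sum_univ_add]
  | smul a x _ ihx =>
    obtain ⟨p, w, ζ, rfl⟩ := ihx
    exact ⟨p, w, fun i => a • ζ i, by simp [Finset.smul_sum]⟩

lemma sum_sum_inner_adjoint_comp_comp {Ω : Type*} (κ : Ω → E₀ →L[ℂ] H) (D : H →L[ℂ] H)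
    {p : ℕ} (w : Fin p → Ω) (ζ : Fin p → E₀) :
    ∑ i, ∑ j, inner ℂ ((adjoint (κ (w j)) ∘L D ∘L κ (w i)) (ζ i)) (ζ j)
      = inner ℂ (D (∑ i, κ (w i) (ζ i))) (∑ j, κ (w j) (ζ j)) := by
  simp only [comp_apply, adjoint_inner_left, map_sum, sum_inner, inner_sum]
  exact Finset.sum_comm

lemma isNNDKernel_adjoint_comp_comp_iff {Ω : Type*} (κ : Ω → E₀ →L[ℂ] H)
    (hdense : Dense (Submodule.span ℂ (⋃ w, Set.range (κ w)) : Set H)) (D : H →L[ℂ] H) :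
    IsNNDKernel (fun z w => adjoint (κ z) ∘L D ∘L κ w) ↔ ∀ f, 0 ≤ inner ℂ (D f) f := by
  constructor
  · intro hG f
    have hclosed : IsClosed {f : H | 0 ≤ inner ℂ (D f) f} :=
      isClosed_le continuous_const (by fun_prop)
    refine hclosed.closure_subset_iff.mpr ?_ (hdense.closure_eq ▸ Set.mem_univ f)
    intro f hf
    obtain ⟨p, w, ζ, rfl⟩ :=
      exists_sum_eq_of_mem_span_iUnion_range (fun w => (κ w : E₀ →ₗ[ℂ] H)) hf
    simpa only [Set.mem_ofPred_eq, coe_coe, sum_sum_inner_adjoint_comp_comp] using hG p w ζ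
  · intro hD p w ζ
    rw [sum_sum_inner_adjoint_comp_comp]
    exact hD _

lemma smul_adjoint_comp_eq_adjoint_comp_comp {m : ℕ} {Ω : Set (Fin m → ℂ)}
    (κ : Ω → E₀ →L[ℂ] H) (M : Fin m → H →L[ℂ] H)
    (hM : ∀ ℓ (w : Ω) x, adjoint (M ℓ) (κ w x) = starRingEnd ℂ ((w : Fin m → ℂ) ℓ) • κ w x)
    (z w : Ω) :
    (1 - ∑ ℓ, (z : Fin m → ℂ) ℓ * starRingEnd ℂ ((w : Fin m → ℂ) ℓ)) • (adjoint (κ z) ∘L κ w)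
      = adjoint (κ z) ∘L (1 - ∑ ℓ, M ℓ ∘L adjoint (M ℓ)) ∘L κ w := by
  have hMκ : ∀ ℓ (w : Ω), adjoint (M ℓ) ∘L κ w = starRingEnd ℂ ((w : Fin m → ℂ) ℓ) • κ w :=
    fun ℓ w => ext (hM ℓ w)
  have hterm : ∀ ℓ, adjoint (κ z) ∘L (M ℓ ∘L adjoint (M ℓ)) ∘L κ w
      = ((z : Fin m → ℂ) ℓ * starRingEnd ℂ ((w : Fin m → ℂ) ℓ)) • (adjoint (κ z) ∘L κ w) := by
    intro ℓ
    calc _ = adjoint (adjoint (M ℓ) ∘L κ z) ∘L (adjoint (M ℓ) ∘L κ w) := by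
          rw [adjoint_comp, adjoint_adjoint]; rfl
      _ = _ := by
          rw [hMκ, hMκ, map_smulₛₗ, smul_comp, comp_smul, smul_smul]
          simp
  simp only [sub_comp, comp_sub, finsetSum_comp, comp_finsetSum, hterm, one_def, id_comp, sub_smul,
    Finset.sum_smul, one_smul]

omit [CompleteSpace H] in
lemma inner_le_norm_sq_iff_inner_one_sub_nonneg (T : H →L[ℂ] H) (f : H) :
    inner ℂ (T f) f ≤ ((‖f‖ ^ 2 : ℝ) : ℂ) ↔ 0 ≤ inner ℂ ((1 - T) f) f := by
  rw [sub_apply, inner_sub_left, one_apply_eq_self, inner_self_eq_norm_sq_to_K, sub_nonneg]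
  norm_cast

end

/-- Corollary 5.2: for the coordinate multipliers `M₁, …, M_m` on a reproducing kernel
Hilbert space over the unit ball `𝔹^m`, the row contractivity condition
`∑ M_ℓ M_ℓ* ≤ I` holds if and only if `(z, w) ↦ (1 − ⟨z, w⟩) • K z w` is nonnegative
definite. -/
theorem row_contractive_iff_drury_arveson_factor_nnd
    {m : ℕ} {E₀ H : Type*}
    [NormedAddCommGroup E₀] [InnerProductSpace ℂ E₀] [CompleteSpace E₀]
    [NormedAddCommGroup H] [InnerProductSpace ℂ H] [CompleteSpace H]
    (κ : {z : Fin m → ℂ | ∑ ℓ, ‖z ℓ‖ ^ 2 < 1} → (E₀ →L[ℂ] H))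
    (hdense : Dense
      (↑(Submodule.span ℂ
        (⋃ w : {z : Fin m → ℂ | ∑ ℓ, ‖z ℓ‖ ^ 2 < 1}, Set.range (κ w))) : Set H))
    (K : {z : Fin m → ℂ | ∑ ℓ, ‖z ℓ‖ ^ 2 < 1} → {z : Fin m → ℂ | ∑ ℓ, ‖z ℓ‖ ^ 2 < 1} →
      (E₀ →L[ℂ] E₀))
    (hK : ∀ z w, K z w = (ContinuousLinearMap.adjoint (κ z)).comp (κ w))
    (M : Fin m → (H →L[ℂ] H))
    (hM : ∀ (ℓ : Fin m) (w : {z : Fin m → ℂ | ∑ ℓ, ‖z ℓ‖ ^ 2 < 1}) (x : E₀),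
      (ContinuousLinearMap.adjoint (M ℓ)) (κ w x)
        = (starRingEnd ℂ) ((w : Fin m → ℂ) ℓ) • κ w x) :
    (∀ f : H,
      (inner ℂ (∑ ℓ : Fin m, (M ℓ) ((ContinuousLinearMap.adjoint (M ℓ)) f)) f : ℂ)
        ≤ ((‖f‖ ^ 2 : ℝ) : ℂ)) ↔
    IsNNDKernel (fun (z w : {z : Fin m → ℂ | ∑ ℓ, ‖z ℓ‖ ^ 2 < 1}) =>
      (1 - ∑ ℓ : Fin m, (z : Fin m → ℂ) ℓ * (starRingEnd ℂ) ((w : Fin m → ℂ) ℓ)) • K z w) := by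
  have hkernel : (fun (z w : {z : Fin m → ℂ | ∑ ℓ, ‖z ℓ‖ ^ 2 < 1}) =>
      (1 - ∑ ℓ : Fin m, (z : Fin m → ℂ) ℓ * (starRingEnd ℂ) ((w : Fin m → ℂ) ℓ)) • K z w)
      = fun z w => (κ z).adjoint ∘L (1 - ∑ ℓ, M ℓ ∘L (M ℓ).adjoint) ∘L κ w := by
    funext z w
    rw [hK, smul_adjoint_comp_eq_adjoint_comp_comp κ M hM]
  rw [hkernel, isNNDKernel_adjoint_comp_comp_iff κ hdense]
  refine forall_congr' fun f => ?_
  rw [← inner_le_norm_sq_iff_inner_one_sub_nonneg, sum_apply]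
  rfl
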